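/- Let (G,Λ) be a pseudo free self-similar k-graph such that g·v = v for all g ∈ G and v ∈ Λ^0, and let T be a maximal tail of Λ. Then H_T ΛT := {μ ∈ ΛT : r(μ) ∈ H_T} is a row-finite source-free k-graph with vertex set H_T, the action of G and the restriction map restrict to it, and (G, H_T ΛT) is a pseudo free self-similar k-graph. -/

import Mathlib

/-- A `k`-graph: a countable small category equipped with a degree functor
`d : Λ → ℕ^k` satisfying the unique factorization property.  Objects are
identified with their identity morphisms (the degree-zero paths);
`comp μ ν` is the composite `μν` (a junk value when `s μ ≠ r ν`). -/
structure KGraph (k : ℕ) where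
  Path : Type
  countable : Countable Path
  r : Path → Path
  s : Path → Path
  d : Path → Fin k → ℕ
  comp : Path → Path → Path
  d_r : ∀ μ, d (r μ) = 0
  d_s : ∀ μ, d (s μ) = 0
  r_r : ∀ μ, r (r μ) = r μ
  s_r : ∀ μ, s (r μ) = r μ
  r_s : ∀ μ, r (s μ) = s μ
  s_s : ∀ μ, s (s μ) = s μ
  eq_r_of_d_eq_zero : ∀ μ, d μ = 0 → μ = r μ
  comp_id : ∀ μ, comp μ (s μ) = μ
  id_comp : ∀ μ, comp (r μ) μ = μ
  r_comp : ∀ μ ν, s μ = r ν → r (comp μ ν) = r μ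
  s_comp : ∀ μ ν, s μ = r ν → s (comp μ ν) = s ν
  d_comp : ∀ μ ν, s μ = r ν → d (comp μ ν) = d μ + d ν
  comp_assoc : ∀ μ ν ξ, s μ = r ν → s ν = r ξ →
    comp (comp μ ν) ξ = comp μ (comp ν ξ)
  factor : ∀ μ p q, d μ = p + q →
    ∃! αβ : Path × Path, s αβ.1 = r αβ.2 ∧ d αβ.1 = p ∧ d αβ.2 = q ∧
      comp αβ.1 αβ.2 = μ

namespace KGraph

variable {k : ℕ} (Λ : KGraph k)

/-- The vertices of a `k`-graph are the degree-zero paths. -/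
def IsVertex (v : Λ.Path) : Prop := Λ.d v = 0

/-- `Λ` is row-finite if `|v Λ^p| < ∞` for every vertex `v` and `p ∈ ℕ^k`. -/
def RowFinite : Prop :=
  ∀ v, Λ.IsVertex v → ∀ p : Fin k → ℕ, {μ | Λ.r μ = v ∧ Λ.d μ = p}.Finite

/-- `Λ` is source-free if `v Λ^p ≠ ∅` for every vertex `v` and `p ∈ ℕ^k`. -/
def SourceFree : Prop :=
  ∀ v, Λ.IsVertex v → ∀ p : Fin k → ℕ, ∃ μ, Λ.r μ = v ∧ Λ.d μ = p

/-- `ΛT`, the set of paths of `Λ` whose source lies in `T`. -/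
def tailPaths (T : Set Λ.Path) : Set Λ.Path := {μ | Λ.s μ ∈ T}

/-- `H Λ T`, the set of paths with source in `T` and range in `H`. -/
def cornerPaths (T H : Set Λ.Path) : Set Λ.Path := {μ | Λ.s μ ∈ T ∧ Λ.r μ ∈ H}

end KGraph

/-- A maximal tail of a `k`-graph. -/
structure MaximalTail {k : ℕ} (Λ : KGraph k) (T : Set Λ.Path) : Prop where
  nonempty : T.Nonempty
  vertex : ∀ v ∈ T, Λ.IsVertex v
  backward_closed : ∀ w, Λ.IsVertex w → ∀ v ∈ T, (∃ μ, Λ.r μ = w ∧ Λ.s μ = v) → w ∈ T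
  reaches : ∀ v ∈ T, ∀ p : Fin k → ℕ, ∃ μ, Λ.r μ = v ∧ Λ.d μ = p ∧ Λ.s μ ∈ T
  directed : ∀ v₁ ∈ T, ∀ v₂ ∈ T, ∃ w ∈ T,
    (∃ μ, Λ.r μ = v₁ ∧ Λ.s μ = w) ∧ (∃ ν, Λ.r ν = v₂ ∧ Λ.s ν = w)

/-- An infinite path of a `k`-graph, i.e. a degree-preserving functor
`x : Ω_k → Λ`; here `val p n` records the segment `x(p, p + n)`. -/
structure InfPath {k : ℕ} (Λ : KGraph k) where
  val : (Fin k → ℕ) → (Fin k → ℕ) → Λ.Path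
  d_val : ∀ p n, Λ.d (val p n) = n
  r_val : ∀ p n, Λ.r (val p n) = val p 0
  s_val : ∀ p n, Λ.s (val p n) = val (p + n) 0
  comp_val : ∀ p m n, Λ.comp (val p m) (val (p + m) n) = val p (m + n)

namespace InfPath

variable {k : ℕ} {Λ : KGraph k}

/-- The shift `σ^n x` of an infinite path. -/
def shift (x : InfPath Λ) (n : Fin k → ℕ) : InfPath Λ where
  val p m := x.val (p + n) m
  d_val p m := x.d_val _ _
  r_val p m := x.r_val _ _
  s_val p m := by rw [x.s_val, add_right_comm]
  comp_val p m m' := by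
    show Λ.comp (x.val (p + n) m) (x.val (p + m + n) m') = x.val (p + n) (m + m')
    rw [add_right_comm p m n]; exact x.comp_val (p + n) m m'

/-- An infinite path lies in the subgraph determined by the set of paths `P`
if all of its segments lie in `P`. -/
def inSub (P : Set Λ.Path) (x : InfPath Λ) : Prop := ∀ p n, x.val p n ∈ P

end InfPath

/-- `z = μ x`: `z` is the infinite path obtained by prepending the finite
path `μ` to the infinite path `x` (which requires `s μ = x(0,0)`). -/
def KGraph.IsExtension {k : ℕ} (Λ : KGraph k) (μ : Λ.Path) (x z : InfPath Λ) : Prop :=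
  Λ.s μ = x.val 0 0 ∧ ∀ n, z.val 0 (Λ.d μ + n) = Λ.comp μ (x.val 0 n)

/-- A cycline pair `(μ, 1, ν)` of the subgraph of `Λ` determined by the set of
paths `P`: `s μ = s ν` and `μ x = ν x` for every infinite path `x` of the
subgraph with range `s ν`. -/
def KGraph.IsCyclinePair {k : ℕ} (Λ : KGraph k) (P : Set Λ.Path) (μ ν : Λ.Path) : Prop :=
  μ ∈ P ∧ ν ∈ P ∧ Λ.s μ = Λ.s ν ∧
    ∀ x : InfPath Λ, x.inSub P →
      ∀ z : InfPath Λ, Λ.IsExtension ν x z → Λ.IsExtension μ x z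

/-- `Per_Γ` for the subgraph `Γ` of `Λ` determined by `P`:
the set of all `d μ − d ν` over cycline pairs `(μ, 1, ν)`. -/
def KGraph.PerPair {k : ℕ} (Λ : KGraph k) (P : Set Λ.Path) : Set (Fin k → ℤ) :=
  {m | ∃ μ ν, Λ.IsCyclinePair P μ ν ∧ m = fun i => (Λ.d μ i : ℤ) - (Λ.d ν i : ℤ)}

/-- A self-similar `k`-graph `(G, Λ)`: an action of the countable discrete
group `G` on `Λ` together with a restriction map `(g, μ) ↦ g|_μ`. -/
structure SelfSimilarSys (k : ℕ) (G : Type) [Group G] [Countable G] (Λ : KGraph k) where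
  act : G → Λ.Path → Λ.Path
  res : G → Λ.Path → G
  act_one : ∀ μ, act 1 μ = μ
  act_mul : ∀ g h μ, act (g * h) μ = act g (act h μ)
  d_act : ∀ g μ, Λ.d (act g μ) = Λ.d μ
  s_act : ∀ g μ, Λ.s (act g μ) = act g (Λ.s μ)
  r_act : ∀ g μ, Λ.r (act g μ) = act g (Λ.r μ)
  act_comp : ∀ g μ ν, Λ.s μ = Λ.r ν →
    act g (Λ.comp μ ν) = Λ.comp (act g μ) (act (res g μ) ν)
  res_vertex : ∀ g v, Λ.IsVertex v → res g v = g
  res_comp : ∀ g μ ν, Λ.s μ = Λ.r ν → res g (Λ.comp μ ν) = res (res g μ) ν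
  res_one : ∀ μ, res 1 μ = 1
  res_mul : ∀ g h μ, res (g * h) μ = res g (act h μ) * res h μ

namespace SelfSimilarSys

variable {k : ℕ} {G : Type} [Group G] [Countable G] {Λ : KGraph k}

/-- `(G, Λ)` is pseudo free: `g·μ = μ` and `g|_μ = 1` imply `g = 1`. -/
def PseudoFree (S : SelfSimilarSys k G Λ) : Prop :=
  ∀ g μ, S.act g μ = μ → S.res g μ = 1 → g = 1

/-- `y = g · x` for infinite paths: `y(0, n) = g · x(0, n)` for all `n`. -/
def IsGAct (S : SelfSimilarSys k G Λ) (g : G) (x y : InfPath Λ) : Prop :=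
  ∀ n, y.val 0 n = S.act g (x.val 0 n)

/-- A cycline triple `(μ, g, ν)` of the subgraph of `Λ` determined by `P`:
`s μ = g · s ν` and `μ (g · x) = ν x` for every infinite path `x` of the
subgraph with range `s ν`. -/
def IsCyclineTriple (S : SelfSimilarSys k G Λ) (P : Set Λ.Path)
    (μ : Λ.Path) (g : G) (ν : Λ.Path) : Prop :=
  μ ∈ P ∧ ν ∈ P ∧ Λ.s μ = S.act g (Λ.s ν) ∧
    ∀ x : InfPath Λ, x.inSub P → Λ.s ν = x.val 0 0 →
      ∀ y : InfPath Λ, S.IsGAct g x y →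
        ∀ z : InfPath Λ, Λ.IsExtension ν x z → Λ.IsExtension μ y z

/-- `Per_{G,Γ}` for the subgraph `Γ` of `Λ` determined by `P`:
the set of all `d μ − d ν` over cycline triples `(μ, g, ν)`. -/
def PerTriple (S : SelfSimilarSys k G Λ) (P : Set Λ.Path) : Set (Fin k → ℤ) :=
  {m | ∃ μ g ν, S.IsCyclineTriple P μ g ν ∧ m = fun i => (Λ.d μ i : ℤ) - (Λ.d ν i : ℤ)}

/-- Membership `y ∈ [x]`: `y` is an infinite path of `ΛT` and
`σ^p x = g · σ^q y` for some `p, q ∈ ℕ^k` and `g ∈ G`. -/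
def ClassMem (S : SelfSimilarSys k G Λ) (T : Set Λ.Path) (x y : InfPath Λ) : Prop :=
  y.inSub (Λ.tailPaths T) ∧ ∃ p q : Fin k → ℕ, ∃ g : G, S.IsGAct g (y.shift q) (x.shift p)

end SelfSimilarSys

/-- `H_T`: the vertices `v ∈ T` such that for all `p, q ∈ ℕ^k` with
`p − q ∈ Per_{ΛT}` and every `μ ∈ v Λ^p T` there is a unique `ν ∈ v Λ^q T`
with `(μ, 1, ν)` a cycline pair of `ΛT`. -/
def KGraph.HSet {k : ℕ} (Λ : KGraph k) (T : Set Λ.Path) : Set Λ.Path :=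
  {v | v ∈ T ∧ ∀ p q : Fin k → ℕ,
    (fun i => (p i : ℤ) - (q i : ℤ)) ∈ Λ.PerPair (Λ.tailPaths T) →
      ∀ μ, Λ.r μ = v → Λ.d μ = p → Λ.s μ ∈ T →
        ∃! ν, Λ.r ν = v ∧ Λ.d ν = q ∧ Λ.IsCyclinePair (Λ.tailPaths T) μ ν}

/-!
The only substantial point is that `H_T` is hereditary in `ΛT`. Let `r(μ) ∈ H_T` and
`ξ ∈ s(μ)Λ^pT`. Then `μξ` has a unique cycline partner `ν'` at `r(μ)` of degree `d(μ) + q`.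
Running `μξ` and `ν'` along an infinite path of `ΛT` through `ν'` shows `ν' = μν₁`, and cycline
pairs of `ΛT` are stable under prepending and cancelling a common initial segment `μ`; this gives
existence and uniqueness of `ν₁`. The infinite paths used are assembled, via unique factorization,
from coherent families of initial segments.
-/

namespace KGraph

variable {k : ℕ} {Λ : KGraph k}

theorem IsVertex.r_eq {v : Λ.Path} (h : Λ.IsVertex v) : Λ.r v = v :=
  (Λ.eq_r_of_d_eq_zero v h).symm

theorem IsVertex.s_eq {v : Λ.Path} (h : Λ.IsVertex v) : Λ.s v = v := by
  simpa only [h.r_eq] using Λ.s_r v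

theorem mem_tailPaths {T : Set Λ.Path} {μ : Λ.Path} : μ ∈ Λ.tailPaths T ↔ Λ.s μ ∈ T :=
  Iff.rfl

theorem mem_cornerPaths {T H : Set Λ.Path} {μ : Λ.Path} :
    μ ∈ Λ.cornerPaths T H ↔ Λ.s μ ∈ T ∧ Λ.r μ ∈ H :=
  Iff.rfl

theorem comp_eq_comp_iff {α β α' β' : Λ.Path} (h : Λ.s α = Λ.r β) (h' : Λ.s α' = Λ.r β')
    (hd : Λ.d α = Λ.d α') : Λ.comp α β = Λ.comp α' β' ↔ α = α' ∧ β = β' := by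
  refine ⟨fun heq => ?_, by rintro ⟨rfl, rfl⟩; rfl⟩
  have hdβ : Λ.d β = Λ.d β' := by
    have hdeg := Λ.d_comp α' β' h'
    rw [← heq, Λ.d_comp α β h, hd] at hdeg
    exact add_left_cancel hdeg
  obtain ⟨_, _, huniq⟩ := Λ.factor (Λ.comp α β) (Λ.d α) (Λ.d β) (Λ.d_comp α β h)
  exact Prod.ext_iff.mp ((huniq (α, β) ⟨h, rfl, rfl, rfl⟩).trans
    (huniq (α', β') ⟨h', hd.symm, hdβ.symm, heq.symm⟩).symm)

theorem comp_left_cancel {α β β' : Λ.Path} (h : Λ.s α = Λ.r β) (h' : Λ.s α = Λ.r β')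
    (heq : Λ.comp α β = Λ.comp α β') : β = β' :=
  ((comp_eq_comp_iff h h' rfl).mp heq).2

theorem eq_s_of_d_eq_zero {α β : Λ.Path} (h : Λ.s α = Λ.r β) (hd : Λ.d β = 0) :
    β = Λ.s α :=
  (Λ.eq_r_of_d_eq_zero β hd).trans h.symm

variable (Λ) in
def IsPrefix (α μ : Λ.Path) : Prop :=
  ∃ β, Λ.s α = Λ.r β ∧ Λ.comp α β = μ

theorem isPrefix_comp {α β : Λ.Path} (h : Λ.s α = Λ.r β) : Λ.IsPrefix α (Λ.comp α β) :=
  ⟨β, h, rfl⟩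

theorem IsPrefix.refl (μ : Λ.Path) : Λ.IsPrefix μ μ :=
  ⟨Λ.s μ, (Λ.r_s μ).symm, Λ.comp_id μ⟩

theorem IsPrefix.trans {α μ ν : Λ.Path} (h₁ : Λ.IsPrefix α μ) (h₂ : Λ.IsPrefix μ ν) :
    Λ.IsPrefix α ν := by
  obtain ⟨β, hβ, rfl⟩ := h₁
  obtain ⟨γ, hγ, rfl⟩ := h₂
  rw [Λ.s_comp α β hβ] at hγ
  exact ⟨Λ.comp β γ, by rw [Λ.r_comp β γ hγ, hβ], (Λ.comp_assoc α β γ hβ hγ).symm⟩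

theorem IsPrefix.eq_of_d_eq {α α' μ : Λ.Path} (h : Λ.IsPrefix α μ) (h' : Λ.IsPrefix α' μ)
    (hd : Λ.d α = Λ.d α') : α = α' := by
  obtain ⟨β, hβ, hμ⟩ := h
  obtain ⟨β', hβ', rfl⟩ := h'
  exact ((comp_eq_comp_iff hβ hβ' hd).mp hμ).1

theorem exists_isPrefix {μ : Λ.Path} {n : Fin k → ℕ} (hn : n ≤ Λ.d μ) :
    ∃ α, Λ.IsPrefix α μ ∧ Λ.d α = n := by
  obtain ⟨⟨α, β⟩, ⟨hs, hd, -, hc⟩, -⟩ :=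
    Λ.factor μ n (Λ.d μ - n) (add_tsub_cancel_of_le hn).symm
  exact ⟨α, ⟨β, hs, hc⟩, hd⟩

theorem IsPrefix.isPrefix_of_d_le {α γ μ : Λ.Path} (hα : Λ.IsPrefix α μ)
    (hγ : Λ.IsPrefix γ μ) (hd : Λ.d α ≤ Λ.d γ) : Λ.IsPrefix α γ := by
  obtain ⟨α', hα', hd'⟩ := exists_isPrefix hd
  rwa [hα.eq_of_d_eq (hα'.trans hγ) hd'.symm]

end KGraph

namespace InfPath

open KGraph

variable {k : ℕ} {Λ : KGraph k}

theorem s_val_zero (x : InfPath Λ) (m n : Fin k → ℕ) : Λ.s (x.val 0 m) = Λ.r (x.val m n) := by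
  rw [x.s_val, x.r_val, zero_add]

theorem val_zero_add (x : InfPath Λ) (m n : Fin k → ℕ) :
    x.val 0 (m + n) = Λ.comp (x.val 0 m) (x.val m n) := by
  simpa only [zero_add] using (x.comp_val 0 m n).symm

theorem val_zero_add_eq_comp_iff (z : InfPath Λ) {μ ν : Λ.Path} (h : Λ.s μ = Λ.r ν) :
    z.val 0 (Λ.d μ + Λ.d ν) = Λ.comp μ ν ↔ z.val 0 (Λ.d μ) = μ ∧ z.val (Λ.d μ) (Λ.d ν) = ν := by
  rw [z.val_zero_add]
  exact comp_eq_comp_iff (z.s_val_zero _ _) h (z.d_val _ _)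

theorem inSub.shift {P : Set Λ.Path} {x : InfPath Λ} (h : x.inSub P) (n : Fin k → ℕ) :
    (x.shift n).inSub P :=
  fun p m => h (p + n) m

theorem inSub_tailPaths {T : Set Λ.Path} {x : InfPath Λ} (h : ∀ n, Λ.s (x.val 0 n) ∈ T) :
    x.inSub (Λ.tailPaths T) := by
  intro p n
  have hn := h (p + n)
  rwa [x.s_val, zero_add, ← x.s_val] at hn

theorem exists_of_prefixes (P : (Fin k → ℕ) → Λ.Path) (hd : ∀ n, Λ.d (P n) = n)
    (hP : ∀ m n, Λ.IsPrefix (P m) (P (m + n))) : ∃ x : InfPath Λ, ∀ n, x.val 0 n = P n := by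
  choose β hsβ hβ using hP
  have hdβ : ∀ m n, Λ.d (β m n) = n := fun m n => by
    have hdeg := Λ.d_comp _ _ (hsβ m n)
    rw [hβ, hd, hd] at hdeg
    exact (add_left_cancel hdeg).symm
  have hβ₀ : ∀ m, β m 0 = Λ.s (P m) := fun m => eq_s_of_d_eq_zero (hsβ m 0) (hdβ m 0)
  refine ⟨{ val := β, d_val := hdβ, r_val := ?_, s_val := ?_, comp_val := ?_ }, fun n => ?_⟩
  · intro p n
    rw [hβ₀, hsβ]
  · intro p n
    rw [hβ₀, ← hβ p n, Λ.s_comp _ _ (hsβ p n)]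
  · intro p m n
    have hs : Λ.s (β p m) = Λ.r (β (p + m) n) := by
      rw [← Λ.s_comp _ _ (hsβ p m), hβ, hsβ]
    refine comp_left_cancel (α := P p) (by rw [Λ.r_comp _ _ hs]; exact hsβ p m)
      (hsβ p (m + n)) ?_
    rw [← Λ.comp_assoc _ _ _ (hsβ p m) hs, hβ, hβ, hβ, add_assoc]
  · have hv : Λ.IsVertex (P 0) := hd 0
    calc β 0 n = Λ.comp (Λ.r (β 0 n)) (β 0 n) := (Λ.id_comp _).symm
      _ = Λ.comp (P 0) (β 0 n) := by rw [← hsβ, hv.s_eq]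
      _ = P n := by rw [hβ, zero_add]

theorem exists_of_directed (w : (Fin k → ℕ) → Λ.Path) (hw : ∀ n, n ≤ Λ.d (w n))
    (hdir : ∀ m n, Λ.IsPrefix (w m) (w (m + n))) :
    ∃ x : InfPath Λ, ∀ n, Λ.IsPrefix (x.val 0 n) (w n) := by
  choose P hPw hPd using fun n => exists_isPrefix (hw n)
  obtain ⟨x, hx⟩ := exists_of_prefixes P hPd fun m n =>
    ((hPw m).trans (hdir m n)).isPrefix_of_d_le (hPw (m + n))
      (by rw [hPd, hPd]; exact le_self_add)
  exact ⟨x, fun n => hx n ▸ hPw n⟩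

end InfPath

namespace KGraph

variable {k : ℕ} {Λ : KGraph k}

theorem exists_infPath_of_forall_exists_extension {S : Set Λ.Path}
    (hS : ∀ μ ∈ S, ∃ μ' ∈ S, Λ.IsPrefix μ μ' ∧ ∀ i, Λ.d μ i < Λ.d μ' i)
    {μ : Λ.Path} (hμ : μ ∈ S) :
    ∃ z : InfPath Λ, z.val 0 (Λ.d μ) = μ ∧ ∀ n, ∃ μ' ∈ S, Λ.IsPrefix (z.val 0 n) μ' := by
  choose f hfS hfpre hfd using hS
  let c : ℕ → S := fun N => (fun ν : S => (⟨f ν ν.2, hfS ν ν.2⟩ : S))^[N] ⟨μ, hμ⟩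
  have hc_succ : ∀ N, (c (N + 1) : Λ.Path) = f (c N) (c N).2 := fun N =>
    congrArg Subtype.val (Function.iterate_succ_apply' _ N _)
  have hc_pre : ∀ a b, Λ.IsPrefix (c a) (c (a + b)) := by
    intro a b
    induction b with
    | zero => exact IsPrefix.refl _
    | succ b ih => exact ih.trans (by rw [← add_assoc, hc_succ]; exact hfpre _ _)
  have hc_d : ∀ N i, N ≤ Λ.d (c N) i := by
    intro N i
    induction N with
    | zero => exact Nat.zero_le _
    | succ N ih => rw [hc_succ]; exact ih.trans_lt (hfd _ _ i)
  obtain ⟨z, hz⟩ := InfPath.exists_of_directed (fun n => (c (∑ i, n i) : Λ.Path))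
    (fun n i => (Finset.single_le_sum (fun j _ => Nat.zero_le (n j)) (Finset.mem_univ i)).trans
      (hc_d _ i))
    (fun m n => by simpa only [Pi.add_apply, Finset.sum_add_distrib] using hc_pre _ _)
  refine ⟨z, ?_, fun n => ⟨_, (c _).2, hz n⟩⟩
  have hμz : Λ.IsPrefix μ (c (∑ i, Λ.d μ i)) := by
    have hpre := hc_pre 0 (∑ i, Λ.d μ i)
    rwa [zero_add] at hpre
  exact (hz (Λ.d μ)).eq_of_d_eq hμz (z.d_val _ _)

theorem exists_isExtension {α : Λ.Path} {x : InfPath Λ} (hs : Λ.s α = x.val 0 0) :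
    ∃ z : InfPath Λ, Λ.IsExtension α x z := by
  have hsr : ∀ n, Λ.s α = Λ.r (x.val 0 n) := fun n => by rw [x.r_val, hs]
  have hdir : ∀ m n, Λ.IsPrefix (Λ.comp α (x.val 0 m)) (Λ.comp α (x.val 0 (m + n))) := by
    intro m n
    rw [x.val_zero_add m n, ← Λ.comp_assoc _ _ _ (hsr m) (x.s_val_zero m n)]
    exact isPrefix_comp (by rw [Λ.s_comp _ _ (hsr m), x.s_val_zero])
  have hdeg : ∀ n, Λ.d (Λ.comp α (x.val 0 n)) = Λ.d α + n := fun n => by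
    rw [Λ.d_comp _ _ (hsr n), x.d_val]
  obtain ⟨z, hz⟩ := InfPath.exists_of_directed (fun n => Λ.comp α (x.val 0 n))
    (fun n => by rw [hdeg]; exact le_add_self) hdir
  refine ⟨z, hs, fun n => (hz (Λ.d α + n)).eq_of_d_eq ?_ (by rw [z.d_val, hdeg])⟩
  have hpre := hdir n (Λ.d α)
  rwa [add_comm n] at hpre

theorem IsExtension.val_zero {μ : Λ.Path} {x z : InfPath Λ} (h : Λ.IsExtension μ x z) :
    z.val 0 (Λ.d μ) = μ := by
  have h₀ := h.2 0
  rwa [add_zero, ← h.1, Λ.comp_id] at h₀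

theorem IsExtension.val_zero_of_comp {μ ν : Λ.Path} {x z : InfPath Λ}
    (hz : Λ.IsExtension (Λ.comp μ ν) x z) (h : Λ.s μ = Λ.r ν) : z.val 0 (Λ.d μ) = μ :=
  ((z.val_zero_add_eq_comp_iff h).mp (by rw [← Λ.d_comp _ _ h]; exact hz.val_zero)).1

theorem isExtension_shift {μ : Λ.Path} {z : InfPath Λ} (h : z.val 0 (Λ.d μ) = μ) :
    Λ.IsExtension μ (z.shift (Λ.d μ)) z := by
  refine ⟨?_, fun n => ?_⟩
  · show Λ.s μ = z.val (0 + Λ.d μ) 0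
    rw [← z.s_val, h]
  · show _ = Λ.comp μ (z.val (0 + Λ.d μ) n)
    rw [zero_add, z.val_zero_add, h]

theorem IsExtension.comp {μ ν : Λ.Path} {x y z : InfPath Λ} (hμ : Λ.IsExtension μ y z)
    (hν : Λ.IsExtension ν x y) (h : Λ.s μ = Λ.r ν) : Λ.IsExtension (Λ.comp μ ν) x z := by
  refine ⟨by rw [Λ.s_comp _ _ h, hν.1], fun n => ?_⟩
  rw [Λ.d_comp _ _ h, add_assoc, hμ.2, hν.2, Λ.comp_assoc _ _ _ h (by rw [x.r_val, hν.1])]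

theorem IsExtension.of_comp {μ ξ : Λ.Path} {x y z : InfPath Λ} (hμ : Λ.IsExtension μ y z)
    (hμξ : Λ.IsExtension (Λ.comp μ ξ) x z) (h : Λ.s μ = Λ.r ξ) : Λ.IsExtension ξ x y := by
  refine ⟨by rw [← Λ.s_comp _ _ h, hμξ.1], fun n => ?_⟩
  have hsξ : Λ.s ξ = Λ.r (x.val 0 n) := by rw [x.r_val, ← hμξ.1, Λ.s_comp _ _ h]
  refine comp_left_cancel (α := μ) (by rw [y.r_val, hμ.1]) (by rw [Λ.r_comp _ _ hsξ, h]) ?_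
  rw [← hμ.2, ← Λ.comp_assoc _ _ _ h hsξ, ← hμξ.2, Λ.d_comp _ _ h, add_assoc]

theorem IsCyclinePair.comp_left {T : Set Λ.Path} {μ ξ ν : Λ.Path}
    (hc : Λ.IsCyclinePair (Λ.tailPaths T) ξ ν) (hξ : Λ.s μ = Λ.r ξ) (hν : Λ.s μ = Λ.r ν) :
    Λ.IsCyclinePair (Λ.tailPaths T) (Λ.comp μ ξ) (Λ.comp μ ν) := by
  obtain ⟨hξT, hνT, hs, hext⟩ := hc
  refine ⟨?_, ?_, by rw [Λ.s_comp _ _ hξ, Λ.s_comp _ _ hν, hs], fun x hx z hz => ?_⟩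
  · rwa [mem_tailPaths, Λ.s_comp _ _ hξ]
  · rwa [mem_tailPaths, Λ.s_comp _ _ hν]
  · have hμ := isExtension_shift (hz.val_zero_of_comp hν)
    exact hμ.comp (hext x hx _ (hμ.of_comp hz hν)) hξ

theorem IsCyclinePair.of_comp_left {T : Set Λ.Path} {μ ξ ν : Λ.Path}
    (hc : Λ.IsCyclinePair (Λ.tailPaths T) (Λ.comp μ ξ) (Λ.comp μ ν))
    (hξ : Λ.s μ = Λ.r ξ) (hν : Λ.s μ = Λ.r ν) : Λ.IsCyclinePair (Λ.tailPaths T) ξ ν := by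
  obtain ⟨hξT, hνT, hs, hext⟩ := hc
  rw [mem_tailPaths, Λ.s_comp _ _ hξ] at hξT
  rw [mem_tailPaths, Λ.s_comp _ _ hν] at hνT
  rw [Λ.s_comp _ _ hξ, Λ.s_comp _ _ hν] at hs
  refine ⟨hξT, hνT, hs, fun x hx y hy => ?_⟩
  obtain ⟨z, hz⟩ := exists_isExtension (α := μ) (x := y)
    (by rw [hν, ← hy.val_zero, y.r_val])
  exact hz.of_comp (hext x hx z (hz.comp hy hν)) hξ

end KGraph

namespace MaximalTail

open KGraph

variable {k : ℕ} {Λ : KGraph k} {T : Set Λ.Path}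

theorem s_mem_of_isPrefix (hT : MaximalTail Λ T)
    {α μ : Λ.Path} (h : Λ.IsPrefix α μ) (hμ : Λ.s μ ∈ T) : Λ.s α ∈ T := by
  obtain ⟨β, hβ, rfl⟩ := h
  rw [Λ.s_comp α β hβ] at hμ
  rw [hβ]
  exact hT.backward_closed _ (Λ.d_r β) _ hμ ⟨β, rfl, rfl⟩

theorem exists_infPath (hT : MaximalTail Λ T) {μ : Λ.Path}
    (hμ : Λ.s μ ∈ T) : ∃ z : InfPath Λ, z.inSub (Λ.tailPaths T) ∧ z.val 0 (Λ.d μ) = μ := by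
  have hext : ∀ ν ∈ Λ.tailPaths T, ∃ ν' ∈ Λ.tailPaths T,
      Λ.IsPrefix ν ν' ∧ ∀ i, Λ.d ν i < Λ.d ν' i := by
    intro ν hν
    obtain ⟨ε, hr, hd, hs⟩ := hT.reaches _ hν 1
    refine ⟨Λ.comp ν ε, by rwa [mem_tailPaths, Λ.s_comp _ _ hr.symm], isPrefix_comp hr.symm,
      fun i => ?_⟩
    simp only [Λ.d_comp _ _ hr.symm, hd, Pi.add_apply, Pi.one_apply, Nat.lt_add_one]
  obtain ⟨z, hzμ, hz⟩ := exists_infPath_of_forall_exists_extension hext hμ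
  refine ⟨z, InfPath.inSub_tailPaths fun n => ?_, hzμ⟩
  obtain ⟨ν, hν, hpre⟩ := hz n
  exact hT.s_mem_of_isPrefix hpre hν

theorem s_mem_hSet (hT : MaximalTail Λ T) {μ : Λ.Path}
    (hr : Λ.r μ ∈ Λ.HSet T) (hs : Λ.s μ ∈ T) : Λ.s μ ∈ Λ.HSet T := by
  refine ⟨hs, fun p q hpq ξ hrξ hdξ hsξ => ?_⟩
  have hμξ : Λ.s μ = Λ.r ξ := hrξ.symm
  have hpq' : (fun i => ((Λ.d μ + p) i : ℤ) - ((Λ.d μ + q) i : ℤ)) ∈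
      Λ.PerPair (Λ.tailPaths T) := by
    convert hpq using 2 with i
    simp only [Pi.add_apply]
    push_cast
    ring
  obtain ⟨ν', ⟨-, hdν', hc⟩, huniq⟩ := hr.2 _ _ hpq' (Λ.comp μ ξ) (Λ.r_comp _ _ hμξ)
    (by rw [Λ.d_comp _ _ hμξ, hdξ]) (by rwa [Λ.s_comp _ _ hμξ])
  obtain ⟨z, hzT, hzν'⟩ := hT.exists_infPath hc.2.1
  have hzμ : z.val 0 (Λ.d μ) = μ :=
    (hc.2.2.2 _ (hzT.shift _) z (isExtension_shift hzν')).val_zero_of_comp hμξ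
  set ν := z.val (Λ.d μ) q
  have hμν : Λ.s μ = Λ.r ν := by rw [← hzμ, z.s_val_zero]
  have hν' : ν' = Λ.comp μ ν := by rw [← hzν', hdν', z.val_zero_add, hzμ]
  rw [hν'] at hc
  refine ⟨ν, ⟨hμν.symm, z.d_val _ _, hc.of_comp_left hμξ hμν⟩, ?_⟩
  rintro ν₂ ⟨hrν₂, hdν₂, hc₂⟩
  have hμν₂ := huniq (Λ.comp μ ν₂) ⟨Λ.r_comp _ _ hrν₂.symm,
    by rw [Λ.d_comp _ _ hrν₂.symm, hdν₂], hc₂.comp_left hμξ hrν₂.symm⟩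
  exact comp_left_cancel hrν₂.symm hμν (hμν₂.trans hν')

theorem comp_mem_cornerPaths_iff (hT : MaximalTail Λ T)
    {α β : Λ.Path} (h : Λ.s α = Λ.r β) :
    Λ.comp α β ∈ Λ.cornerPaths T (Λ.HSet T) ↔
      α ∈ Λ.cornerPaths T (Λ.HSet T) ∧ β ∈ Λ.cornerPaths T (Λ.HSet T) := by
  simp only [mem_cornerPaths, Λ.s_comp _ _ h, Λ.r_comp _ _ h, h]
  constructor
  · rintro ⟨hβ, hα⟩
    have hrβ : Λ.r β ∈ T := hT.backward_closed _ (Λ.d_r β) _ hβ ⟨β, rfl, rfl⟩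
    refine ⟨⟨hrβ, hα⟩, hβ, ?_⟩
    rw [← h] at hrβ ⊢
    exact hT.s_mem_hSet hα hrβ
  · rintro ⟨⟨-, hα⟩, hβ, -⟩
    exact ⟨hβ, hα⟩

end MaximalTail

theorem corner_subgraph_selfSimilar_general
    {k : ℕ} (G : Type) [Group G] [Countable G] (Λ : KGraph k)
    (hRF : Λ.RowFinite)
    (S : SelfSimilarSys k G Λ) (hPF : S.PseudoFree)
    (hfix : ∀ g v, Λ.IsVertex v → S.act g v = v)
    (T : Set Λ.Path) (hT : MaximalTail Λ T) :
    -- H_T consists of vertices of ΛT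
    (∀ v ∈ Λ.HSet T, v ∈ T ∧ Λ.IsVertex v) ∧
    -- H_T ΛT contains ranges and sources of its members; its vertex set is H_T
    (∀ μ ∈ Λ.cornerPaths T (Λ.HSet T),
      Λ.r μ ∈ Λ.HSet T ∧ Λ.s μ ∈ Λ.HSet T) ∧
    (∀ v, Λ.IsVertex v → (v ∈ Λ.cornerPaths T (Λ.HSet T) ↔ v ∈ Λ.HSet T)) ∧
    -- H_T ΛT is closed under composition and factorization
    (∀ μ ν, Λ.s μ = Λ.r ν → μ ∈ Λ.cornerPaths T (Λ.HSet T) →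
      ν ∈ Λ.tailPaths T → Λ.comp μ ν ∈ Λ.cornerPaths T (Λ.HSet T)) ∧
    (∀ μ ∈ Λ.cornerPaths T (Λ.HSet T), ∀ α β, Λ.s α = Λ.r β → Λ.comp α β = μ →
      α ∈ Λ.cornerPaths T (Λ.HSet T) ∧ β ∈ Λ.cornerPaths T (Λ.HSet T)) ∧
    -- H_T ΛT is row-finite and source-free
    (∀ v ∈ Λ.HSet T, ∀ p : Fin k → ℕ,
      {μ | Λ.r μ = v ∧ Λ.d μ = p ∧ μ ∈ Λ.cornerPaths T (Λ.HSet T)}.Finite) ∧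
    (∀ v ∈ Λ.HSet T, ∀ p : Fin k → ℕ,
      ∃ μ ∈ Λ.cornerPaths T (Λ.HSet T), Λ.r μ = v ∧ Λ.d μ = p) ∧
    -- the action of G restricts to H_T ΛT
    (∀ g μ, μ ∈ Λ.cornerPaths T (Λ.HSet T) →
      S.act g μ ∈ Λ.cornerPaths T (Λ.HSet T)) ∧
    -- (G, H_T ΛT) is pseudo free
    (∀ g, ∀ μ ∈ Λ.cornerPaths T (Λ.HSet T),
      S.act g μ = μ → S.res g μ = 1 → g = 1) := by
  refine ⟨fun v hv => ⟨hv.1, hT.vertex v hv.1⟩, fun μ hμ => ⟨hμ.2, hT.s_mem_hSet hμ.2 hμ.1⟩,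
    ?_, ?_, ?_, ?_, ?_, ?_, fun g μ _ => hPF g μ⟩
  · intro v hv
    rw [KGraph.mem_cornerPaths, hv.r_eq, hv.s_eq]
    exact and_iff_right_of_imp fun h => h.1
  · intro μ ν h hμ hν
    have hrν : Λ.r ν ∈ Λ.HSet T := h ▸ hT.s_mem_hSet hμ.2 hμ.1
    exact (hT.comp_mem_cornerPaths_iff h).2 ⟨hμ, hν, hrν⟩
  · rintro μ hμ α β h rfl
    exact (hT.comp_mem_cornerPaths_iff h).1 hμ
  · exact fun v hv p => (hRF v (hT.vertex v hv.1) p).subset fun μ hμ => ⟨hμ.1, hμ.2.1⟩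
  · intro v hv p
    obtain ⟨μ, hr, hd, hs⟩ := hT.reaches v hv.1 p
    exact ⟨μ, ⟨hs, hr ▸ hv⟩, hr, hd⟩
  · intro g μ hμ
    rwa [KGraph.mem_cornerPaths, S.s_act, S.r_act, hfix g _ (Λ.d_s μ), hfix g _ (Λ.d_r μ)]

/-- For a pseudo free self-similar `k`-graph `(G, Λ)` with `g · v = v` for
all vertices `v`, and a maximal tail `T` of `Λ`: `H_T ΛT` is a row-finite
source-free `k`-graph with vertex set `H_T`, the action and restriction map
restrict to it, and `(G, H_T ΛT)` is a pseudo free self-similar `k`-graph. -/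
theorem corner_subgraph_selfSimilar
    {k : ℕ} (G : Type) [Group G] [Countable G] (Λ : KGraph k)
    (hRF : Λ.RowFinite) (hSF : Λ.SourceFree)
    (S : SelfSimilarSys k G Λ) (hPF : S.PseudoFree)
    (hfix : ∀ g v, Λ.IsVertex v → S.act g v = v)
    (T : Set Λ.Path) (hT : MaximalTail Λ T) :
    -- H_T consists of vertices of ΛT
    (∀ v ∈ Λ.HSet T, v ∈ T ∧ Λ.IsVertex v) ∧
    -- H_T ΛT contains ranges and sources of its members; its vertex set is H_T
    (∀ μ ∈ Λ.cornerPaths T (Λ.HSet T),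
      Λ.r μ ∈ Λ.HSet T ∧ Λ.s μ ∈ Λ.HSet T) ∧
    (∀ v, Λ.IsVertex v → (v ∈ Λ.cornerPaths T (Λ.HSet T) ↔ v ∈ Λ.HSet T)) ∧
    -- H_T ΛT is closed under composition and factorization
    (∀ μ ν, Λ.s μ = Λ.r ν → μ ∈ Λ.cornerPaths T (Λ.HSet T) →
      ν ∈ Λ.tailPaths T → Λ.comp μ ν ∈ Λ.cornerPaths T (Λ.HSet T)) ∧
    (∀ μ ∈ Λ.cornerPaths T (Λ.HSet T), ∀ α β, Λ.s α = Λ.r β → Λ.comp α β = μ →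
      α ∈ Λ.cornerPaths T (Λ.HSet T) ∧ β ∈ Λ.cornerPaths T (Λ.HSet T)) ∧
    -- H_T ΛT is row-finite and source-free
    (∀ v ∈ Λ.HSet T, ∀ p : Fin k → ℕ,
      {μ | Λ.r μ = v ∧ Λ.d μ = p ∧ μ ∈ Λ.cornerPaths T (Λ.HSet T)}.Finite) ∧
    (∀ v ∈ Λ.HSet T, ∀ p : Fin k → ℕ,
      ∃ μ ∈ Λ.cornerPaths T (Λ.HSet T), Λ.r μ = v ∧ Λ.d μ = p) ∧
    -- the action of G restricts to H_T ΛT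
    (∀ g μ, μ ∈ Λ.cornerPaths T (Λ.HSet T) →
      S.act g μ ∈ Λ.cornerPaths T (Λ.HSet T)) ∧
    -- (G, H_T ΛT) is pseudo free
    (∀ g, ∀ μ ∈ Λ.cornerPaths T (Λ.HSet T),
      S.act g μ = μ → S.res g μ = 1 → g = 1) :=
  corner_subgraph_selfSimilar_general G Λ hRF S hPF hfix T hT
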